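/- Every Δ-regular Ramanujan graph (with Δ ≥ 3) is (32/Δ, 1/4)-immune: in the majority model, any vertex set S of size s ≤ n/4 controls at most (32/Δ)·s vertices. -/
import Mathlib


open Finset

variable {V : Type*} [Fintype V] [DecidableEq V]

/-- One round of the majority model: a vertex adopts the strict majority color among its
neighbors (`true` = blue, `false` = red) and keeps its current color in case of a tie. -/
def majStep (G : SimpleGraph V) [DecidableRel G.Adj] (C : V → Bool) : V → Bool :=
  fun v =>
    let b := ((G.neighborFinset v).filter fun u => C u = true).card
    let r := ((G.neighborFinset v).filter fun u => C u = false).card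
    if r < b then true else if b < r then false else C v

/-- The set of blue vertices of a configuration. -/
def blueSet (C : V → Bool) : Finset V := univ.filter fun v => C v = true

/-- `epairs G S S'` is the number of ordered pairs `(v,u)` with `v ∈ S`, `u ∈ S'`, `{v,u} ∈ E`. -/
def epairs (G : SimpleGraph V) [DecidableRel G.Adj] (S S' : Finset V) : ℕ :=
  ((S ×ˢ S').filter fun q => G.Adj q.1 q.2).card

/-- `S` controls `S'`: whenever all of `S` is blue in some configuration, all of `S'`
is blue in the next configuration. -/
def controls (G : SimpleGraph V) [DecidableRel G.Adj] (S S' : Finset V) : Prop :=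
  ∀ C : V → Bool, (∀ v ∈ S, C v = true) → ∀ v ∈ S', majStep G C v = true

omit [Fintype V] [DecidableEq V] in
lemma epairs_eq_sum (G : SimpleGraph V) [DecidableRel G.Adj] (S S' : Finset V) :
    epairs G S S' = ∑ u ∈ S', (S.filter fun v => G.Adj v u).card := by
  unfold epairs
  rw [Finset.card_filter, Finset.sum_product, Finset.sum_comm]
  exact Finset.sum_congr rfl fun u _ => (Finset.card_filter _ _).symm

/-- Every `Δ`-regular Ramanujan graph (second-largest absolute adjacency eigenvalue
`√(2Δ-1)`, here encoded via the expander mixing lemma) is `(32/Δ, 1/4)`-immune: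
any set of at most `n/4` vertices controls at most `(32/Δ)`-times-its-size many vertices. -/
theorem stmt4 (G : SimpleGraph V) [DecidableRel G.Adj] (Δ : ℕ) (hΔ : 3 ≤ Δ)
    (hreg : G.IsRegularOfDegree Δ)
    (hmix : ∀ S S' : Finset V,
      |(epairs G S S' : ℝ) - S.card * S'.card * Δ / Fintype.card V| ≤
        Real.sqrt (2*Δ - 1) * Real.sqrt (S.card * S'.card))
    (S S' : Finset V) (hS : (S.card : ℝ) ≤ (Fintype.card V : ℝ) / 4)
    (hctrl : controls G S S') :
    (S'.card : ℝ) ≤ 32 / Δ * S.card := by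
  classical
  rcases Nat.eq_zero_or_pos S'.card with h0 | h0
  · rw [h0]
    push_cast
    positivity
  have hn : (0 : ℝ) < Fintype.card V := by
    have : 0 < Fintype.card V :=
      lt_of_lt_of_le h0 (Finset.card_le_card (Finset.subset_univ S') |>.trans (by simp))
    exact_mod_cast this
  -- Step 1: every u ∈ S' has at least Δ/2 neighbors in S
  have key : ∀ u ∈ S', (Δ : ℝ) ≤ 2 * ((S.filter fun v => G.Adj v u).card : ℝ) := by
    intro u hu
    have h := hctrl (fun v => decide (v ∈ S)) (by intro v hv; simp [hv]) u hu
    simp only [majStep] at h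
    set b := ((G.neighborFinset u).filter fun w => (decide (w ∈ S)) = true).card with hb
    set r := ((G.neighborFinset u).filter fun w => (decide (w ∈ S)) = false).card with hr
    have hbr : r ≤ b := by
      by_contra h'
      push_neg at h'
      rw [if_neg (by omega), if_pos h'] at h
      exact Bool.false_ne_true h
    have hsum : b + r = Δ := by
      rw [hb, hr]
      have h1 : ((G.neighborFinset u).filter fun w => (decide (w ∈ S)) = false)
          = ((G.neighborFinset u).filter fun w => ¬ ((decide (w ∈ S)) = true)) := by
        apply Finset.filter_congr
        intro w _
        simp
      rw [h1, Finset.card_filter_add_card_filter_not,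
        SimpleGraph.card_neighborFinset_eq_degree, hreg u]
    have hbeq : (S.filter fun v => G.Adj v u).card = b := by
      rw [hb]
      congr 1
      ext w
      simp [SimpleGraph.mem_neighborFinset, G.adj_comm, and_comm]
    rw [hbeq]
    have : Δ ≤ 2 * b := by omega
    exact_mod_cast this
  -- Step 2: Δ * |S'| ≤ 2 * epairs
  have h1 : (Δ : ℝ) * S'.card ≤ 2 * (epairs G S S' : ℝ) := by
    have := epairs_eq_sum G S S'
    rw [this]
    push_cast
    rw [Finset.mul_sum]
    calc (Δ : ℝ) * S'.card = ∑ u ∈ S', (Δ : ℝ) := by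
          rw [Finset.sum_const, nsmul_eq_mul, mul_comm]
      _ ≤ ∑ u ∈ S', 2 * ((S.filter fun v => G.Adj v u).card : ℝ) :=
          Finset.sum_le_sum key
  have hs0' : (0:ℝ) ≤ S.card := by positivity
  have ht0' : (0:ℝ) < S'.card := by exact_mod_cast h0
  have h3 : (3:ℝ) ≤ (Δ:ℝ) := by exact_mod_cast hΔ
  have hmix' := hmix S S'
  set s := (S.card : ℝ)
  set t := (S'.card : ℝ)
  set a := Real.sqrt (2*Δ - 1)
  set c := Real.sqrt (s * t)
  have hs0 : (0:ℝ) ≤ s := hs0'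
  have ht0 : (0:ℝ) < t := ht0'
  have hΔ0 : (0:ℝ) < Δ := by exact_mod_cast (by omega : 0 < Δ)
  have ha0 : 0 ≤ a := Real.sqrt_nonneg _
  have hc0 : 0 ≤ c := Real.sqrt_nonneg _
  have ha2 : a ^ 2 = 2 * Δ - 1 := Real.sq_sqrt (by linarith)
  have hc2 : c ^ 2 = s * t := Real.sq_sqrt (by positivity)
  have hup : (epairs G S S' : ℝ) ≤ s * t * Δ / Fintype.card V + a * c := by
    have := abs_le.mp hmix'
    linarith [this.2]
  have hfrac : s * t * Δ / Fintype.card V ≤ t * Δ / 4 := by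
    rw [div_le_iff₀ hn]
    have : s * (t * Δ) ≤ (Fintype.card V / 4) * (t * Δ) := by
      apply mul_le_mul_of_nonneg_right hS (by positivity)
    nlinarith
  have hkey2 : Δ * t ≤ 4 * (a * c) := by nlinarith
  have hsq : (Δ * t) ^ 2 ≤ 16 * ((2*Δ) * (s * t)) := by nlinarith [mul_le_mul hkey2 hkey2 (by positivity) (by positivity)]
  rw [div_mul_eq_mul_div, le_div_iff₀ hΔ0]
  nlinarith [mul_pos hΔ0 ht0]
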